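/- arXiv:1407.2474 — 3 statements merged into one kernel-verified Lean document; each statement's English description precedes it below -/
import Mathlib

section
/- Let λ, μ be distinct complex numbers, let δ be a real number with δ ≠ −Re(λ) and δ ≠ −Re(μ), and let f, g : [0,∞) → ℂ be smooth functions satisfying g'' − (λ+μ)g' + λμ·g = f, with sup_{t≥0} e^{δt}|f(t)| finite. Then there exist constants a, b ∈ ℂ and a function v with g(t) = a·e^{λt} + b·e^{μt} + v(t), where sup_{t≥0} e^{δt}|v(t)| ≤ ((|δ+Re λ|⁻¹ + |δ+Re μ|⁻¹)/|λ−μ|)·sup_{t≥0} e^{δt}|f(t)|. -/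
open MeasureTheory Set

private lemma exp_hasDerivAt' (κ : ℂ) (t : ℝ) :
    HasDerivAt (fun s : ℝ => Complex.exp (κ * s)) (κ * Complex.exp (κ * t)) t := by
  have h0 : HasDerivAt (fun s : ℝ => (s : ℂ)) 1 t := by
    exact (hasDerivAt_id t).ofReal_comp
  have h1 : HasDerivAt (fun s : ℝ => κ * (s : ℂ)) κ t := by
    simpa using h0.const_mul κ
  simpa [mul_comm] using h1.cexp

private lemma first_order (κ : ℂ) (δ M : ℝ) (hδ : δ + κ.re ≠ 0) (f : ℝ → ℂ)
    (hf : Continuous f) (hM : ∀ t, 0 ≤ t → Real.exp (δ * t) * ‖f t‖ ≤ M) :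
    ∃ P : ℝ → ℂ, (∀ t, HasDerivAt P (κ * P t + f t) t) ∧
      ∀ t, 0 ≤ t → Real.exp (δ * t) * ‖P t‖ ≤ M / |δ + κ.re| := by
  have hM0 : 0 ≤ M := le_trans (norm_nonneg (f 0)) (by simpa using hM 0 le_rfl)
  set φ : ℝ → ℂ := fun s => Complex.exp (-κ * s) * f s with hφdef
  have hφc : Continuous φ := by
    apply Continuous.mul _ hf
    exact Complex.continuous_exp.comp (by continuity)
  have hφb : ∀ s, 0 ≤ s → ‖φ s‖ ≤ M * Real.exp (-(κ.re + δ) * s) := by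
    intro s hs
    have hfb : ‖f s‖ ≤ M * Real.exp (-(δ * s)) := by
      have h1 := hM s hs
      rw [← le_div_iff₀' (by positivity)] at h1
      simpa [Real.exp_neg, div_eq_mul_inv, mul_comm] using h1
    have hn : ‖φ s‖ = Real.exp (-κ.re * s) * ‖f s‖ := by
      simp [hφdef, Complex.norm_exp]
    rw [hn]
    calc Real.exp (-κ.re * s) * ‖f s‖
        ≤ Real.exp (-κ.re * s) * (M * Real.exp (-(δ * s))) :=
          mul_le_mul_of_nonneg_left hfb (Real.exp_nonneg _)
      _ = M * (Real.exp (-κ.re * s) * Real.exp (-(δ * s))) := by ring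
      _ = M * Real.exp (-(κ.re + δ) * s) := by rw [← Real.exp_add]; congr 1; ring
  set I : ℝ → ℂ := fun u : ℝ => ∫ s in (0:ℝ)..u, φ s with hIdef
  have hI : ∀ t : ℝ, HasDerivAt I (φ t) t := by
    intro t
    exact intervalIntegral.integral_hasDerivAt_right (hφc.intervalIntegrable 0 t)
      (hφc.stronglyMeasurableAtFilter _ _) hφc.continuousAt
  have hQ : ∀ c : ℂ, ∀ t : ℝ, HasDerivAt (fun u : ℝ => Complex.exp (κ * u) * (I u - c))
      (κ * (Complex.exp (κ * t) * (I t - c)) + f t) t := by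
    intro c t
    have h2 := (exp_hasDerivAt' κ t).mul ((hI t).sub_const c)
    have he : Complex.exp (κ * t) * φ t = f t := by
      rw [hφdef]
      simp only [← mul_assoc, ← Complex.exp_add]
      norm_num
    refine h2.congr_deriv ?_; symm
    rw [← he]; ring
  rcases hδ.lt_or_gt with hlt | hgt
  · -- decaying case: integrate from 0
    refine ⟨fun u => Complex.exp (κ * u) * (I u - 0), hQ 0, ?_⟩
    intro t ht
    set a : ℝ := -(δ + κ.re) with hadef
    have ha : 0 < a := by simp [hadef]; linarith
    have hbc : Continuous fun s : ℝ => M * Real.exp (-(κ.re + δ) * s) := by continuity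
    have hexpint : ∫ s in (0:ℝ)..t, Real.exp (a * s) = (Real.exp (a * t) - 1) / a := by
      have hd : ∀ s : ℝ, HasDerivAt (fun u => Real.exp (a * u) / a) (Real.exp (a * s)) s := by
        intro s
        have h := ((Real.hasDerivAt_exp (a * s)).comp s
          ((hasDerivAt_id s).const_mul a)).div_const a
        refine h.congr_deriv ?_; symm
        field_simp
      rw [intervalIntegral.integral_eq_sub_of_hasDerivAt (fun s _ => hd s)
        ((Real.continuous_exp.comp (continuous_const.mul continuous_id)).intervalIntegrable 0 t)]
      simp [sub_div]
    have hIb : ‖I t‖ ≤ M * Real.exp (a * t) / a := by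
      calc ‖I t‖ = ‖∫ s in (0:ℝ)..t, φ s‖ := by rw [hIdef]
        _ ≤ ∫ s in (0:ℝ)..t, ‖φ s‖ := intervalIntegral.norm_integral_le_integral_norm ht
        _ ≤ ∫ s in (0:ℝ)..t, M * Real.exp (-(κ.re + δ) * s) :=
            intervalIntegral.integral_mono_on ht (hφc.norm.intervalIntegrable 0 t)
              (hbc.intervalIntegrable 0 t) (fun s hs => hφb s hs.1)
        _ = M * ((Real.exp (a * t) - 1) / a) := by
            have heq : ∀ s : ℝ, -(κ.re + δ) * s = a * s := by intro s; rw [hadef]; ring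
            simp_rw [heq]
            rw [intervalIntegral.integral_const_mul, hexpint]
        _ ≤ M * (Real.exp (a * t) / a) := by
            apply mul_le_mul_of_nonneg_left _ hM0
            gcongr
            linarith [Real.exp_pos (a * t)]
        _ = M * Real.exp (a * t) / a := by ring
    have habs : ‖Complex.exp (κ * t) * (I t - 0)‖ = Real.exp (κ.re * t) * ‖I t‖ := by
      simp [map_mul, Complex.norm_exp, Complex.mul_re]
    rw [habs]
    calc Real.exp (δ * t) * (Real.exp (κ.re * t) * ‖I t‖)
        ≤ Real.exp (δ * t) * (Real.exp (κ.re * t) * (M * Real.exp (a * t) / a)) := by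
          exact mul_le_mul_of_nonneg_left
            (mul_le_mul_of_nonneg_left hIb (Real.exp_nonneg _)) (Real.exp_nonneg _)
      _ = M / a * (Real.exp (δ * t) * Real.exp (κ.re * t) * Real.exp (a * t)) := by ring
      _ = M / a := by
          rw [← Real.exp_add, ← Real.exp_add]
          have h0 : δ * t + κ.re * t + a * t = 0 := by rw [hadef]; ring
          rw [h0, Real.exp_zero, mul_one]
      _ = M / |δ + κ.re| := by rw [abs_of_neg hlt]
  · -- growing case: integrate from infinity
    refine ⟨fun u => Complex.exp (κ * u) * (I u - ∫ s in Ioi (0:ℝ), φ s), hQ _, ?_⟩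
    intro t ht
    have hb : (0:ℝ) < κ.re + δ := by linarith
    have hbint : ∀ u : ℝ, IntegrableOn (fun s => M * Real.exp (-(κ.re + δ) * s)) (Ioi u) := by
      intro u
      exact (exp_neg_integrableOn_Ioi u hb).const_mul M
    have hint : IntegrableOn φ (Ioi 0) := by
      apply Integrable.mono' (hbint 0) (hφc.aestronglyMeasurable.restrict)
      rw [ae_restrict_iff' measurableSet_Ioi]
      exact ae_of_all _ fun s hs => hφb s (le_of_lt hs)
    have hsplit : (∫ s in Ioi (0:ℝ), φ s) = (∫ s in (0:ℝ)..t, φ s) + ∫ s in Ioi t, φ s := by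
      rw [intervalIntegral.integral_of_le ht, ← setIntegral_union (Ioc_disjoint_Ioi le_rfl)
        measurableSet_Ioi (hint.mono_set Ioc_subset_Ioi_self) (hint.mono_set (Ioi_subset_Ioi ht)),
        Ioc_union_Ioi_eq_Ioi ht]
    have hIt : I t - (∫ s in Ioi (0:ℝ), φ s) = -∫ s in Ioi t, φ s := by
      rw [hIdef, hsplit]; ring
    have hexpint : (∫ s in Ioi t, Real.exp (-(κ.re + δ) * s)) =
        Real.exp (-(κ.re + δ) * t) / (κ.re + δ) := by
      rw [show (fun s : ℝ => Real.exp (-(κ.re + δ) * s)) = fun s => Real.exp (-((κ.re + δ) * s)) by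
        funext s; ring_nf]
      calc (∫ s in Ioi t, Real.exp (-((κ.re + δ) * s)))
          = (κ.re + δ)⁻¹ • ∫ s in Ioi ((κ.re + δ) * t), Real.exp (-s) :=
            integral_comp_mul_left_Ioi (fun u => Real.exp (-u)) t hb
        _ = Real.exp (-(κ.re + δ) * t) / (κ.re + δ) := by
            rw [integral_exp_neg_Ioi, smul_eq_mul]
            ring_nf
    have hJb : ‖∫ s in Ioi t, φ s‖ ≤ M * Real.exp (-(κ.re + δ) * t) / (κ.re + δ) := by
      calc ‖∫ s in Ioi t, φ s‖ ≤ ∫ s in Ioi t, ‖φ s‖ := norm_integral_le_integral_norm φ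
        _ ≤ ∫ s in Ioi t, M * Real.exp (-(κ.re + δ) * s) :=
            setIntegral_mono_on (IntegrableOn.mono_set hint.norm (Ioi_subset_Ioi ht)) (hbint t)
              measurableSet_Ioi (fun s hs => hφb s (le_trans ht (le_of_lt hs)))
        _ = M * Real.exp (-(κ.re + δ) * t) / (κ.re + δ) := by
            rw [integral_const_mul, hexpint]; ring
    have habs : ‖Complex.exp (κ * t) * (I t - ∫ s in Ioi (0:ℝ), φ s)‖ =
        Real.exp (κ.re * t) * ‖∫ s in Ioi t, φ s‖ := by
      rw [hIt]
      simp [map_mul, Complex.norm_exp, Complex.mul_re]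
    rw [habs]
    calc Real.exp (δ * t) * (Real.exp (κ.re * t) * ‖∫ s in Ioi t, φ s‖)
        ≤ Real.exp (δ * t) *
            (Real.exp (κ.re * t) * (M * Real.exp (-(κ.re + δ) * t) / (κ.re + δ))) := by
          exact mul_le_mul_of_nonneg_left
            (mul_le_mul_of_nonneg_left hJb (Real.exp_nonneg _)) (Real.exp_nonneg _)
      _ = M / (κ.re + δ) *
            (Real.exp (δ * t) * Real.exp (κ.re * t) * Real.exp (-(κ.re + δ) * t)) := by ring
      _ = M / (κ.re + δ) := by
          rw [← Real.exp_add, ← Real.exp_add]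
          have h0 : δ * t + κ.re * t + -(κ.re + δ) * t = 0 := by ring
          rw [h0, Real.exp_zero, mul_one]
      _ = M / |δ + κ.re| := by rw [abs_of_pos hgt]; ring_nf

private lemma const_of_zero_deriv (u : ℝ → ℂ) (hc : Continuous u)
    (hd : ∀ t, 0 ≤ t → HasDerivAt u 0 t) : ∀ t, 0 ≤ t → u t = u 0 := by
  intro t ht
  exact constant_of_has_deriv_right_zero (hc.continuousOn (s := Icc 0 t))
    (fun x hx => (hd x hx.1).hasDerivWithinAt) t (by simp [ht])

theorem ode_decomposition (lam mu : ℂ) (hne : lam ≠ mu) (δ : ℝ)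
    (hδl : δ ≠ -lam.re) (hδm : δ ≠ -mu.re)
    (f g : ℝ → ℂ) (hf : ContDiff ℝ (⊤ : ℕ∞) f) (hg : ContDiff ℝ (⊤ : ℕ∞) g)
    (hode : ∀ t, 0 ≤ t →
      deriv (deriv g) t - (lam + mu) * deriv g t + lam * mu * g t = f t)
    (M : ℝ) (hM : ∀ t, 0 ≤ t → Real.exp (δ * t) * ‖f t‖ ≤ M) :
    ∃ (a b : ℂ) (v : ℝ → ℂ),
      (∀ t, 0 ≤ t →
        g t = a * Complex.exp (lam * t) + b * Complex.exp (mu * t) + v t) ∧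
      (∀ t, 0 ≤ t → Real.exp (δ * t) * ‖v t‖ ≤
        ((|δ + lam.re|⁻¹ + |δ + mu.re|⁻¹) / ‖lam - mu‖) * M) := by
  have hδl' : δ + lam.re ≠ 0 := fun h => hδl (by linarith)
  have hδm' : δ + mu.re ≠ 0 := fun h => hδm (by linarith)
  have hlm : lam - mu ≠ 0 := sub_ne_zero.mpr hne
  have habslm : (0:ℝ) < ‖lam - mu‖ := by
    simpa [norm_pos_iff] using hlm
  obtain ⟨Pl, hPl, hPlb⟩ := first_order lam δ M hδl' f hf.continuous hM
  obtain ⟨Pm, hPm, hPmb⟩ := first_order mu δ M hδm' f hf.continuous hM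
  obtain ⟨v, hvdef⟩ : ∃ v : ℝ → ℂ, v = fun t => (Pl t - Pm t) / (lam - mu) := ⟨_, rfl⟩
  have hPlc : Continuous Pl := by
    rw [continuous_iff_continuousAt]; exact fun t => (hPl t).continuousAt
  have hPmc : Continuous Pm := by
    rw [continuous_iff_continuousAt]; exact fun t => (hPm t).continuousAt
  have hvc : Continuous v := by rw [hvdef]; exact (hPlc.sub hPmc).div_const _
  have hv : ∀ t, HasDerivAt v ((lam * Pl t + f t - (mu * Pm t + f t)) / (lam - mu)) t := by
    rw [hvdef]; exact fun t => ((hPl t).sub (hPm t)).div_const _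
  have hvkey : ∀ t, (lam * Pl t + f t - (mu * Pm t + f t)) / (lam - mu) - mu * v t = Pl t := by
    intro t
    rw [hvdef]
    field_simp
    ring
  -- regularity of g
  have hg2 : ContDiff ℝ ((⊤ : ℕ∞) : WithTop ℕ∞) g := hg.of_le (by simp)
  have hgd : Differentiable ℝ g := hg2.differentiable (by norm_num)
  have hgc' : ContDiff ℝ ((⊤ : ℕ∞) : WithTop ℕ∞) (deriv g) := (contDiff_infty_iff_deriv.mp hg2).2
  have hgd' : Differentiable ℝ (deriv g) := hgc'.differentiable (by norm_num)
  -- ψ = g' - mu g - Pl satisfies ψ' = lam ψ on [0,∞)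
  have hψ : ∀ t : ℝ, 0 ≤ t → HasDerivAt (fun u => deriv g u - mu * g u - Pl u)
      (lam * (deriv g t - mu * g t - Pl t)) t := by
    intro t ht
    have h1 := ((hgd' t).hasDerivAt.sub ((hgd t).hasDerivAt.const_mul mu)).sub (hPl t)
    refine h1.congr_deriv ?_; symm
    linear_combination -hode t ht
  -- χ = exp(-lam t) ψ is constant on [0,∞)
  have hχ : ∀ t : ℝ, 0 ≤ t →
      Complex.exp (-lam * t) * (deriv g t - mu * g t - Pl t)
        = Complex.exp (-lam * (0:ℝ)) * (deriv g 0 - mu * g 0 - Pl 0) := by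
    apply const_of_zero_deriv
    · exact (Complex.continuous_exp.comp (continuous_const.mul Complex.continuous_ofReal)).mul
        ((hgc'.continuous.sub (continuous_const.mul hg.continuous)).sub hPlc)
    · intro t ht
      have h1 := (exp_hasDerivAt' (-lam) t).mul (hψ t ht)
      refine h1.congr_deriv ?_; symm
      ring
  obtain ⟨c, hcdef⟩ : ∃ c : ℂ, c = deriv g 0 - mu * g 0 - Pl 0 := ⟨_, rfl⟩
  have hψeq : ∀ t : ℝ, 0 ≤ t →
      deriv g t - mu * g t - Pl t = c * Complex.exp (lam * t) := by
    intro t ht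
    have h1 : Complex.exp (-lam * t) * (deriv g t - mu * g t - Pl t) = c := by
      rw [hcdef]
      simpa using hχ t ht
    have h2 := congrArg (fun z => Complex.exp (lam * (t:ℂ)) * z) h1
    rwa [← mul_assoc, ← Complex.exp_add, show lam * (t:ℂ) + -lam * t = 0 by ring,
      Complex.exp_zero, one_mul, mul_comm (Complex.exp (lam * (t:ℂ)))] at h2
  -- θ is constant on [0,∞)
  have hθ : ∀ t : ℝ, 0 ≤ t →
      Complex.exp (-mu * t) * (g t - v t) - c / (lam - mu) * Complex.exp ((lam - mu) * t)
        = Complex.exp (-mu * (0:ℝ)) * (g 0 - v 0)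
          - c / (lam - mu) * Complex.exp ((lam - mu) * (0:ℝ)) := by
    apply const_of_zero_deriv
    · apply Continuous.sub
      · exact (Complex.continuous_exp.comp (continuous_const.mul Complex.continuous_ofReal)).mul
          (hg.continuous.sub hvc)
      · exact continuous_const.mul
          (Complex.continuous_exp.comp (continuous_const.mul Complex.continuous_ofReal))
    · intro t ht
      have hD := ((exp_hasDerivAt' (-mu) t).mul ((hgd t).hasDerivAt.sub (hv t))).sub
        ((exp_hasDerivAt' (lam - mu) t).const_mul (c / (lam - mu)))
      refine hD.congr_deriv ?_; symm
      have h4 : Complex.exp (-mu * (t:ℂ)) * Complex.exp (lam * (t:ℂ))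
          = Complex.exp ((lam - mu) * (t:ℂ)) := by
        rw [← Complex.exp_add]; congr 1; ring
      have h5 : c / (lam - mu) * ((lam - mu) * Complex.exp ((lam - mu) * (t:ℂ)))
          = c * Complex.exp ((lam - mu) * (t:ℂ)) := by field_simp
      rw [h5]
      have h2 := hvkey t
      have h3 := hψeq t ht
      simp only [Pi.sub_apply]
      linear_combination Complex.exp (-mu * (t:ℂ)) * h2
        - Complex.exp (-mu * (t:ℂ)) * h3 - c * h4
  -- assemble
  refine ⟨c / (lam - mu), g 0 - v 0 - c / (lam - mu), v, ?_, ?_⟩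
  · intro t ht
    have hT := hθ t ht
    have h0 : Complex.exp (-mu * ((0:ℝ):ℂ)) * (g 0 - v 0)
        - c / (lam - mu) * Complex.exp ((lam - mu) * ((0:ℝ):ℂ))
        = g 0 - v 0 - c / (lam - mu) := by
      norm_num
    rw [h0] at hT
    have h6 : Complex.exp (mu * (t:ℂ)) * Complex.exp (-mu * (t:ℂ)) = 1 := by
      rw [← Complex.exp_add, show mu * (t:ℂ) + -mu * t = 0 by ring, Complex.exp_zero]
    have h4' : Complex.exp (mu * (t:ℂ)) * Complex.exp ((lam - mu) * (t:ℂ))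
        = Complex.exp (lam * (t:ℂ)) := by
      rw [← Complex.exp_add]; congr 1; ring
    linear_combination Complex.exp (mu * (t:ℂ)) * hT - (g t - v t) * h6
      + (c / (lam - mu)) * h4'
  · intro t ht
    have h1 := hPlb t ht
    have h2 := hPmb t ht
    have habs : ‖v t‖ = ‖Pl t - Pm t‖ / ‖lam - mu‖ := by
      rw [hvdef]; simp [map_div₀]
    rw [habs]
    have htri : ‖Pl t - Pm t‖ ≤ ‖Pl t‖ + ‖Pm t‖ := by
      simpa using norm_sub_le (Pl t) (Pm t)
    calc Real.exp (δ * t) * (‖Pl t - Pm t‖ / ‖lam - mu‖)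
        = Real.exp (δ * t) * ‖Pl t - Pm t‖ / ‖lam - mu‖ := by ring
      _ ≤ (Real.exp (δ * t) * ‖Pl t‖
            + Real.exp (δ * t) * ‖Pm t‖) / ‖lam - mu‖ := by
          gcongr
          rw [← mul_add]
          exact mul_le_mul_of_nonneg_left htri (Real.exp_nonneg _)
      _ ≤ (M / |δ + lam.re| + M / |δ + mu.re|) / ‖lam - mu‖ := by
          gcongr
      _ = ((|δ + lam.re|⁻¹ + |δ + mu.re|⁻¹) / ‖lam - mu‖) * M := by
          rw [div_eq_mul_inv M, div_eq_mul_inv M]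
          ring
end

section
/- Let n ≥ 2, 1 ≤ p ≤ n−1, θ₀ ∈ (0, π/2) with cos θ₀ = √(p/n), and define τ(φ) = arctan((cos 2φ − cos 2θ₀)/sin 2φ) for φ ∈ (0, θ₀]. Then φ ↦ φ + τ(φ) is strictly decreasing on (0, θ₀], τ(θ₀) = 0, and φ + τ(φ) ≥ θ₀ for all φ ∈ (0, θ₀]. -/
/-!
Write `c = cos 2θ₀`. On `(0, π/2)` the map `φ ↦ φ + arctan ((cos 2φ - c) / sin 2φ)` has derivative
`(c² - 1) / ((cos 2φ - c)² + sin² 2φ)`, which is negative because `0 < 2θ₀ < π` forces `c² < 1`.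
At `φ = θ₀` the arctangent vanishes, so the map takes the value `θ₀` there and, being decreasing,
is at least `θ₀` to the left of it.
-/

open Real Set

noncomputable section

/-- The far corner `φ + τ(φ)` of the invariant square `[φ, φ + τ(φ)]²`, with `c = cos 2θ₀`. -/
def squareCorner (c φ : ℝ) : ℝ := φ + arctan ((cos (2 * φ) - c) / sin (2 * φ))

lemma hasDerivAt_squareCorner (c : ℝ) {x : ℝ} (hx : sin (2 * x) ≠ 0) :
    HasDerivAt (squareCorner c) ((c ^ 2 - 1) / ((cos (2 * x) - c) ^ 2 + sin (2 * x) ^ 2)) x := by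
  set s := sin (2 * x)
  set u := cos (2 * x)
  have hdouble : HasDerivAt (fun y : ℝ => 2 * y) 2 x := by
    simpa using (hasDerivAt_id x).const_mul 2
  have hcos : HasDerivAt (fun y => cos (2 * y) - c) (-s * 2) x :=
    ((hasDerivAt_cos (2 * x)).comp x hdouble).sub_const c
  have hsin : HasDerivAt (fun y => sin (2 * y)) (u * 2) x := (hasDerivAt_sin (2 * x)).comp x hdouble
  have hF : HasDerivAt (squareCorner c)
      (1 + 1 / (1 + ((u - c) / s) ^ 2) * ((-s * 2 * s - (u - c) * (u * 2)) / s ^ 2)) x :=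
    (hasDerivAt_id x).add (hcos.div hsin hx).arctan
  convert hF using 1
  have hpyth : s ^ 2 + u ^ 2 = 1 := sin_sq_add_cos_sq (2 * x)
  have hden : (u - c) ^ 2 + s ^ 2 ≠ 0 := by positivity
  field_simp
  linear_combination ((u - c) ^ 2 + s ^ 2) * hpyth

lemma strictAntiOn_squareCorner {c : ℝ} (hc : c ^ 2 < 1) :
    StrictAntiOn (squareCorner c) (Ioo 0 (π / 2)) := by
  have hsin : ∀ x ∈ Ioo 0 (π / 2), sin (2 * x) ≠ 0 := fun x hx =>
    (sin_pos_of_pos_of_lt_pi (by linarith [hx.1]) (by linarith [hx.2])).ne'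
  refine strictAntiOn_of_deriv_neg (convex_Ioo 0 (π / 2))
    (fun x hx => (hasDerivAt_squareCorner c (hsin x hx)).continuousAt.continuousWithinAt)
    fun x hx => ?_
  rw [interior_Ioo] at hx
  rw [(hasDerivAt_squareCorner c (hsin x hx)).deriv]
  exact div_neg_of_neg_of_pos (by linarith)
    (add_pos_of_nonneg_of_pos (sq_nonneg _) (sq_pos_of_ne_zero (hsin x hx)))

lemma squareCorner_cos_two_mul (θ : ℝ) : squareCorner (cos (2 * θ)) θ = θ := by
  simp [squareCorner]

lemma sq_cos_two_mul_lt_one {θ : ℝ} (hθ : θ ∈ Ioo 0 (π / 2)) : cos (2 * θ) ^ 2 < 1 := by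
  have hsin : 0 < sin (2 * θ) := sin_pos_of_pos_of_lt_pi (by linarith [hθ.1]) (by linarith [hθ.2])
  nlinarith [sin_sq_add_cos_sq (2 * θ)]

end

theorem tau_properties_general
    (θ₀ : ℝ) (hθ₀ : θ₀ ∈ Set.Ioo 0 (Real.pi / 2))
    (τ : ℝ → ℝ)
    (hτ : ∀ φ ∈ Set.Ioc (0 : ℝ) θ₀,
      τ φ = Real.arctan ((Real.cos (2 * φ) - Real.cos (2 * θ₀)) / Real.sin (2 * φ))) :
    StrictAntiOn (fun φ => φ + τ φ) (Set.Ioc 0 θ₀) ∧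
    τ θ₀ = 0 ∧
    ∀ φ ∈ Set.Ioc (0 : ℝ) θ₀, θ₀ ≤ φ + τ φ := by
  have hθ₀_mem : θ₀ ∈ Ioc 0 θ₀ := ⟨hθ₀.1, le_rfl⟩
  have hsub : Ioc 0 θ₀ ⊆ Ioo 0 (π / 2) := Ioc_subset_Ioo_right hθ₀.2
  have hcorner : EqOn (fun φ => φ + τ φ) (squareCorner (cos (2 * θ₀))) (Ioc 0 θ₀) :=
    fun φ hφ => by simp only [hτ φ hφ, squareCorner]
  have hanti : StrictAntiOn (fun φ => φ + τ φ) (Ioc 0 θ₀) :=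
    ((strictAntiOn_squareCorner (sq_cos_two_mul_lt_one hθ₀)).mono hsub).congr hcorner.symm
  refine ⟨hanti, by simp [hτ θ₀ hθ₀_mem], fun φ hφ => ?_⟩
  have hvalue : θ₀ + τ θ₀ = θ₀ := (hcorner hθ₀_mem).trans (squareCorner_cos_two_mul θ₀)
  calc θ₀ = θ₀ + τ θ₀ := hvalue.symm
    _ ≤ φ + τ φ := hanti.antitoneOn hφ hθ₀_mem hφ.2

theorem tau_properties (n p : ℕ) (hn : 2 ≤ n) (hp1 : 1 ≤ p) (hp2 : p ≤ n - 1)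
    (θ₀ : ℝ) (hθ₀ : θ₀ ∈ Set.Ioo 0 (Real.pi / 2))
    (hcos : Real.cos θ₀ = Real.sqrt ((p : ℝ) / n))
    (τ : ℝ → ℝ)
    (hτ : ∀ φ ∈ Set.Ioc (0 : ℝ) θ₀,
      τ φ = Real.arctan ((Real.cos (2 * φ) - Real.cos (2 * θ₀)) / Real.sin (2 * φ))) :
    StrictAntiOn (fun φ => φ + τ φ) (Set.Ioc 0 θ₀) ∧
    τ θ₀ = 0 ∧
    ∀ φ ∈ Set.Ioc (0 : ℝ) θ₀, θ₀ ≤ φ + τ φ :=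
  tau_properties_general θ₀ hθ₀ τ hτ
end

section
/- For n ≥ 2 and 1 ≤ p ≤ n−1, at the zero (π/2, 0) of Y(θ,φ) = (−sin 2θ·sin(θ−φ), (n−2p)cos(θ−φ) + n·cos(θ+φ)), the Jacobian matrix of Y has two real eigenvalues of opposite signs, with an eigenvector in the direction (0,1) for the negative eigenvalue and an eigenvector in the direction (p+1, p−n) for the positive eigenvalue. -/
/-!
At `(π/2, 0)` the Jacobian of `Y` is the lower triangular matrix `J = [[2, 0], [2(p - n), -2p]]`,
so its eigenvalues are `2 > 0` and `-2p < 0`; `(0, 1)` spans the kernel of `J + 2p`, and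
`(p + 1, p - n)` that of `J - 2`.
-/

open Real

namespace SimonsCone

noncomputable def field (n p : ℝ) (z : ℝ × ℝ) : ℝ × ℝ :=
  (-sin (2 * z.1) * sin (z.1 - z.2), (n - 2 * p) * cos (z.1 - z.2) + n * cos (z.1 + z.2))

theorem fderiv_field_apply (n p : ℝ) (z v : ℝ × ℝ) :
    fderiv ℝ (field n p) z v =
      (-2 * cos (2 * z.1) * sin (z.1 - z.2) * v.1
          - sin (2 * z.1) * cos (z.1 - z.2) * (v.1 - v.2),
        -(n - 2 * p) * sin (z.1 - z.2) * (v.1 - v.2) - n * sin (z.1 + z.2) * (v.1 + v.2)) := by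
  have hfst := hasFDerivAt_fst (𝕜 := ℝ) (E := ℝ) (F := ℝ) (p := z)
  have hsnd := hasFDerivAt_snd (𝕜 := ℝ) (E := ℝ) (F := ℝ) (p := z)
  have hY : HasFDerivAt (field n p) _ z :=
    (((hfst.const_mul 2).sin.neg.mul (hfst.sub hsnd).sin).prodMk
      (((hfst.sub hsnd).cos.const_mul (n - 2 * p)).add ((hfst.add hsnd).cos.const_mul n)))
  rw [hY.fderiv]
  simp only [ContinuousLinearMap.prod_apply, add_apply, smul_apply, neg_apply, sub_apply,
    ContinuousLinearMap.coe_fst', ContinuousLinearMap.coe_snd', Pi.neg_apply, Pi.sub_apply,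
    Pi.add_apply, smul_eq_mul, Prod.mk.injEq]
  constructor <;> ring

theorem fderiv_field_pi_div_two_zero_apply (n p : ℝ) (v : ℝ × ℝ) :
    fderiv ℝ (field n p) (π / 2, 0) v = (2 * v.1, 2 * (p - n) * v.1 - 2 * p * v.2) := by
  have h2 : 2 * (π / 2) = π := by ring
  rw [fderiv_field_apply]
  simp only [h2, sub_zero, add_zero, cos_pi, sin_pi, sin_pi_div_two, Prod.mk.injEq]
  constructor <;> ring

end SimonsCone

open SimonsCone in
theorem saddle_at_pi_half_zero_general (n p : ℕ) (hp1 : 1 ≤ p)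
    (Y : ℝ × ℝ → ℝ × ℝ)
    (hY : ∀ z : ℝ × ℝ, Y z =
      (-Real.sin (2 * z.1) * Real.sin (z.1 - z.2),
        ((n : ℝ) - 2 * p) * Real.cos (z.1 - z.2) + (n : ℝ) * Real.cos (z.1 + z.2))) :
    ∃ μplus μminus : ℝ, 0 < μplus ∧ μminus < 0 ∧
      fderiv ℝ Y (Real.pi / 2, 0) (0, 1) = μminus • ((0 : ℝ), (1 : ℝ)) ∧
      fderiv ℝ Y (Real.pi / 2, 0) ((p : ℝ) + 1, (p : ℝ) - n)
        = μplus • ((p : ℝ) + 1, (p : ℝ) - n) := by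
  obtain rfl : Y = field n p := funext hY
  have hp : (0 : ℝ) < p := by exact_mod_cast hp1
  refine ⟨2, -2 * p, two_pos, by linarith, ?_, ?_⟩ <;>
  · rw [fderiv_field_pi_div_two_zero_apply, Prod.smul_mk, Prod.mk.injEq, smul_eq_mul,
      smul_eq_mul]
    constructor <;> ring

theorem saddle_at_pi_half_zero (n p : ℕ) (hn : 2 ≤ n) (hp1 : 1 ≤ p) (hp2 : p ≤ n - 1)
    (Y : ℝ × ℝ → ℝ × ℝ)
    (hY : ∀ z : ℝ × ℝ, Y z =
      (-Real.sin (2 * z.1) * Real.sin (z.1 - z.2),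
        ((n : ℝ) - 2 * p) * Real.cos (z.1 - z.2) + (n : ℝ) * Real.cos (z.1 + z.2))) :
    ∃ μplus μminus : ℝ, 0 < μplus ∧ μminus < 0 ∧
      fderiv ℝ Y (Real.pi / 2, 0) (0, 1) = μminus • ((0 : ℝ), (1 : ℝ)) ∧
      fderiv ℝ Y (Real.pi / 2, 0) ((p : ℝ) + 1, (p : ℝ) - n)
        = μplus • ((p : ℝ) + 1, (p : ℝ) - n) :=
  saddle_at_pi_half_zero_general n p hp1 Y hY
end
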